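/- Let s ≥ 1, let K be a number field of degree 3s with exactly s real embeddings and 2s complex (non-real) embeddings, with embeddings enumerated σ_1, …, σ_{3s} : K → ℂ so that σ_1, …, σ_s are the real embeddings and σ_{2s+j} = conj ∘ σ_{s+j} for j = 1, …, s. Let U ⊆ 𝓞_K^× be a subgroup which is admissible and satisfies the pluriclosed condition. Then for every natural number m, the number of subsets I ⊆ {1, …, 3s} with |I| = m such that ∏_{i∈I} σ_i(u) = 1 for all u ∈ U equals the binomial coefficient C(s, k) if m = 3k for some natural number k, and equals 0 if m is not divisible by 3. -/

import Mathlib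

open NumberField

/-- A labeling of the embeddings of a number field `K` of degree `3s` with `s` real and `2s`
complex (non-real) embeddings: an enumeration `σ 0, …, σ (3s-1)` of all field embeddings
`K → ℂ` such that `σ 0, …, σ (s-1)` are exactly the real embeddings and
`σ (2s+j) = conj ∘ σ (s+j)` for `j = 0, …, s-1`.  (Indices are `0`-based.) -/
structure EmbeddingLabeling (K : Type*) [Field K] (s : ℕ) where
  σ : ℕ → (K →+* ℂ)
  inj : ∀ i < 3 * s, ∀ j < 3 * s, σ i = σ j → i = j
  surj : ∀ φ : K →+* ℂ, ∃ i < 3 * s, σ i = φ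
  isReal : ∀ i < s, ComplexEmbedding.IsReal (σ i)
  notReal : ∀ i, s ≤ i → i < 3 * s → ¬ ComplexEmbedding.IsReal (σ i)
  conjRel : ∀ j < s, σ (2 * s + j) = ComplexEmbedding.conjugate (σ (s + j))

/-- A subgroup `U ≤ 𝓞_K^×` is *admissible* if it contains units `u 0, …, u (s-1)` for which
the `s×s` matrix `(log σ_j(u_i))` is nonsingular. -/
def IsAdmissible {K : Type*} [Field K] {s : ℕ}
    (L : EmbeddingLabeling K s) (U : Subgroup (𝓞 K)ˣ) : Prop :=
  ∃ u : Fin s → (𝓞 K)ˣ, (∀ i, u i ∈ U) ∧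
    (Matrix.of fun i j : Fin s =>
      Real.log ((L.σ j (algebraMap (𝓞 K) K (u i))).re)).det ≠ 0

/-- A subgroup `U ≤ 𝓞_K^×` satisfies the *pluriclosed condition* if
`σ_j(u)·|σ_{s+j}(u)|² = 1` for every `u ∈ U` and every `j ∈ {0,…,s-1}`. -/
def IsPluriclosed {K : Type*} [Field K] {s : ℕ}
    (L : EmbeddingLabeling K s) (U : Subgroup (𝓞 K)ˣ) : Prop :=
  ∀ u ∈ U, ∀ j < s, L.σ j (algebraMap (𝓞 K) K (u : (𝓞 K)ˣ)) *
    ((‖L.σ (s + j) (algebraMap (𝓞 K) K (u : (𝓞 K)ˣ))‖ : ℝ) : ℂ) ^ 2 = 1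

def tripleSet (s : ℕ) (S : Finset ℕ) : Finset ℕ :=
  S ∪ S.image (s + ·) ∪ S.image (2 * s + ·)

lemma mem_tripleSet {s : ℕ} {S : Finset ℕ} {i : ℕ} :
    i ∈ tripleSet s S ↔ i ∈ S ∨ (∃ j ∈ S, s + j = i) ∨ (∃ j ∈ S, 2 * s + j = i) := by
  simp [tripleSet, Finset.mem_union, Finset.mem_image, or_assoc]

lemma tripleSet_disj1 {s : ℕ} {S : Finset ℕ} (hS : S ⊆ Finset.range s) :
    Disjoint S (S.image (s + ·)) := by
  rw [Finset.disjoint_left]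
  intro a ha hb
  have h1 : a < s := Finset.mem_range.1 (hS ha)
  obtain ⟨j, hj, rfl⟩ := Finset.mem_image.1 hb
  omega

lemma tripleSet_disj2 {s : ℕ} {S : Finset ℕ} (hS : S ⊆ Finset.range s) :
    Disjoint (S ∪ S.image (s + ·)) (S.image (2 * s + ·)) := by
  rw [Finset.disjoint_left]
  intro a ha hb
  obtain ⟨j, hj, rfl⟩ := Finset.mem_image.1 hb
  rcases Finset.mem_union.1 ha with h | h
  · have := Finset.mem_range.1 (hS h); omega
  · obtain ⟨j', hj', h⟩ := Finset.mem_image.1 h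
    have := Finset.mem_range.1 (hS hj')
    omega

lemma card_tripleSet {s : ℕ} {S : Finset ℕ} (hS : S ⊆ Finset.range s) :
    (tripleSet s S).card = 3 * S.card := by
  rw [tripleSet, Finset.card_union_of_disjoint (tripleSet_disj2 hS),
    Finset.card_union_of_disjoint (tripleSet_disj1 hS),
    Finset.card_image_of_injective _ (add_right_injective s),
    Finset.card_image_of_injective _ (add_right_injective (2 * s))]
  ring

lemma tripleSet_inter {s : ℕ} {S : Finset ℕ} (hS : S ⊆ Finset.range s) :
    tripleSet s S ∩ Finset.range s = S := by
  ext i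
  simp only [Finset.mem_inter, mem_tripleSet, Finset.mem_range]
  constructor
  · rintro ⟨h | ⟨j, hj, rfl⟩ | ⟨j, hj, rfl⟩, hi⟩
    · exact h
    · omega
    · omega
  · intro h
    exact ⟨Or.inl h, Finset.mem_range.1 (hS h)⟩

lemma tripleSet_injOn {s : ℕ} : Set.InjOn (tripleSet s) ↑((Finset.range s).powersetCard k) := by
  intro S hS T hT h
  simp only [Finset.mem_coe, Finset.mem_powersetCard] at hS hT
  rw [← tripleSet_inter hS.1, ← tripleSet_inter hT.1, h]

lemma prod_tripleSet {M : Type*} [CommMonoid M] {s : ℕ} {S : Finset ℕ}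
    (hS : S ⊆ Finset.range s) (f : ℕ → M) :
    ∏ i ∈ tripleSet s S, f i = ∏ j ∈ S, (f j * f (s + j) * f (2 * s + j)) := by
  rw [tripleSet, Finset.prod_union (tripleSet_disj2 hS), Finset.prod_union (tripleSet_disj1 hS),
    Finset.prod_image (fun a _ b _ h => add_right_injective s h),
    Finset.prod_image (fun a _ b _ h => add_right_injective (2 * s) h),
    ← Finset.prod_mul_distrib, ← Finset.prod_mul_distrib]

lemma sum_range_triple {M : Type*} [AddCommMonoid M] (s : ℕ) (f : ℕ → M) :
    ∑ i ∈ Finset.range (3 * s), f i = ∑ j ∈ Finset.range s, (f j + f (s + j) + f (2 * s + j)) := by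
  have h3 : 3 * s = s + (s + s) := by ring
  rw [h3, Finset.sum_range_add, Finset.sum_range_add, Finset.sum_add_distrib,
    Finset.sum_add_distrib, add_assoc]
  congr 1
  congr 1
  apply Finset.sum_congr rfl
  intro j _
  congr 1
  omega

/-- Let `s ≥ 1` and let `K` be a number field of degree `3s` with `s`
real and `2s` complex embeddings, labeled as above.  Let `U ≤ 𝓞_K^×` be admissible and
satisfy the pluriclosed condition.  Then for every `m`, the number of subsets
`I ⊆ {0,…,3s-1}` with `|I| = m` and `∏_{i∈I} σ_i(u) = 1` for all `u ∈ U` equals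
`C(s, m/3)` if `3 ∣ m`, and `0` otherwise. -/
theorem count_relations_eq_choose
    (s : ℕ) (hs : 1 ≤ s)
    (K : Type*) [Field K] [NumberField K]
    (hdeg : Module.finrank ℚ K = 3 * s)
    (L : EmbeddingLabeling K s) (U : Subgroup (𝓞 K)ˣ)
    (hadm : IsAdmissible L U) (hpc : IsPluriclosed L U) :
    ∀ m : ℕ,
      {I : Finset ℕ | I ⊆ Finset.range (3 * s) ∧ I.card = m ∧
        ∀ u ∈ U, ∏ i ∈ I, L.σ i (algebraMap (𝓞 K) K (u : (𝓞 K)ˣ)) = 1}.ncard =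
      if 3 ∣ m then s.choose (m / 3) else 0 := by
  intro m
  obtain ⟨uu, huU, hdet⟩ := hadm
  -- nonvanishing
  have hne : ∀ (u : (𝓞 K)ˣ) (i : ℕ), L.σ i (algebraMap (𝓞 K) K (u : (𝓞 K)ˣ)) ≠ 0 := by
    intro u i
    have h0 : algebraMap (𝓞 K) K (u : (𝓞 K)ˣ) ≠ 0 :=
      ((u : (𝓞 K)ˣ).isUnit.map (algebraMap (𝓞 K) K)).ne_zero
    intro h
    exact h0 ((L.σ i).injective (h.trans (map_zero (L.σ i)).symm))
  -- real form of the pluriclosed condition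
  have hre : ∀ u ∈ U, ∀ j < s, (L.σ j (algebraMap (𝓞 K) K (u : (𝓞 K)ˣ))).re
      * (‖L.σ (s + j) (algebraMap (𝓞 K) K (u : (𝓞 K)ˣ))‖) ^ 2 = 1 := by
    intro u hu j hj
    have h2 := congrArg Complex.re (hpc u hu j hj)
    simpa [← Complex.ofReal_pow, Complex.mul_re] using h2
  have habs_pos : ∀ (u : (𝓞 K)ˣ) (i : ℕ),
      0 < ‖L.σ i (algebraMap (𝓞 K) K (u : (𝓞 K)ˣ))‖ :=
    fun u i => norm_pos_iff.2 (hne u i)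
  have hre_pos : ∀ u ∈ U, ∀ j < s, 0 < (L.σ j (algebraMap (𝓞 K) K (u : (𝓞 K)ˣ))).re := by
    intro u hu j hj
    have h := hre u hu j hj
    nlinarith [habs_pos u (s + j)]
  -- log relation from pluriclosedness
  have hlog : ∀ u ∈ U, ∀ j < s,
      Real.log ‖L.σ (s + j) (algebraMap (𝓞 K) K (u : (𝓞 K)ˣ))‖
        = -(1 / 2) * Real.log ((L.σ j (algebraMap (𝓞 K) K (u : (𝓞 K)ˣ))).re) := by
    intro u hu j hj
    have h := hre u hu j hj
    have h1 := congrArg Real.log h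
    rw [Real.log_mul (ne_of_gt (hre_pos u hu j hj)) (pow_ne_zero 2 (ne_of_gt (habs_pos u (s + j)))), Real.log_pow,
      Real.log_one] at h1
    push_cast at h1
    linarith
  -- absolute values of real embeddings
  have him : ∀ j < s, ∀ x : K, (L.σ j x).im = 0 := by
    intro j hj x
    have h := (ComplexEmbedding.isReal_iff.1 (L.isReal j hj))
    have := congrFun (congrArg (fun f : K →+* ℂ => (f : K → ℂ)) h) x
    simp only [ComplexEmbedding.conjugate_coe_eq] at this
    exact Complex.conj_eq_iff_im.1 this
  have habs_real : ∀ u ∈ U, ∀ j < s,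
      ‖L.σ j (algebraMap (𝓞 K) K (u : (𝓞 K)ˣ))‖
        = (L.σ j (algebraMap (𝓞 K) K (u : (𝓞 K)ˣ))).re := by
    intro u hu j hj
    have hz : L.σ j (algebraMap (𝓞 K) K (u : (𝓞 K)ˣ))
        = ((L.σ j (algebraMap (𝓞 K) K (u : (𝓞 K)ˣ))).re : ℂ) :=
      Complex.ext (Complex.ofReal_re _).symm (by simp [him j hj])
    rw [hz, Complex.norm_real, Real.norm_eq_abs, abs_of_pos (hre_pos u hu j hj), Complex.ofReal_re]
  have habs2 : ∀ (x : K), ∀ j < s,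
      ‖L.σ (2 * s + j) x‖ = ‖L.σ (s + j) x‖ := by
    intro x j hj
    rw [L.conjRel j hj, ComplexEmbedding.conjugate_coe_eq, Complex.norm_conj]
  -- key structural fact
  have key : ∀ I : Finset ℕ, I ⊆ Finset.range (3 * s) →
      (∀ u ∈ U, ∏ i ∈ I, L.σ i (algebraMap (𝓞 K) K (u : (𝓞 K)ˣ)) = 1) →
      ∀ j < s, ((j ∈ I ↔ s + j ∈ I) ∧ (j ∈ I ↔ 2 * s + j ∈ I)) := by
    intro I hI hrel
    set c : ℕ → ℝ := fun j => (if j ∈ I then (1 : ℝ) else 0)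
      - (if s + j ∈ I then (1 : ℝ) / 2 else 0)
      - (if 2 * s + j ∈ I then (1 : ℝ) / 2 else 0) with hc_def
    have hsum : ∀ u ∈ U, ∑ j ∈ Finset.range s,
        c j * Real.log ((L.σ j (algebraMap (𝓞 K) K (u : (𝓞 K)ˣ))).re) = 0 := by
      intro u hu
      have h1 : Real.log ‖∏ i ∈ I, L.σ i (algebraMap (𝓞 K) K (u : (𝓞 K)ˣ))‖ = 0 := by
        rw [hrel u hu]; simp
      rw [norm_prod, Real.log_prod (fun i _ => (norm_ne_zero_iff.2 (hne u i)))] at h1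
      have h2 : ∑ i ∈ Finset.range (3 * s),
          (if i ∈ I then Real.log ‖L.σ i (algebraMap (𝓞 K) K (u : (𝓞 K)ˣ))‖ else 0)
          = 0 := by
        rw [Finset.sum_ite_mem, Finset.inter_eq_right.2 hI]
        exact h1
      rw [sum_range_triple] at h2
      rw [← h2]
      apply Finset.sum_congr rfl
      intro j hj
      have hj' : j < s := Finset.mem_range.1 hj
      rw [habs2 _ j hj', hlog u hu j hj', habs_real u hu j hj']
      simp only [hc_def]
      split_ifs <;> ring
    have hM : (Matrix.of fun i j : Fin s =>
        Real.log ((L.σ j (algebraMap (𝓞 K) K (uu i))).re)).mulVec (fun j : Fin s => c j) = 0 := by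
      funext i
      have h := hsum (uu i) (huU i)
      simp only [Matrix.mulVec, dotProduct, Matrix.of_apply, Pi.zero_apply]
      rw [Fin.sum_univ_eq_sum_range
        (fun j => Real.log ((L.σ j ((algebraMap (𝓞 K) K) ((uu i : (𝓞 K)ˣ) : 𝓞 K))).re) * c j), ← h]
      exact Finset.sum_congr rfl fun j _ => mul_comm _ _
    have hv := Matrix.eq_zero_of_mulVec_eq_zero hdet hM
    intro j hj
    have hcj : c j = 0 := congrFun hv ⟨j, hj⟩
    simp only [hc_def] at hcj
    split_ifs at hcj <;> norm_num at hcj <;> tauto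
  -- structure: each relation set is a triple set
  have hstruct : ∀ I : Finset ℕ, I ⊆ Finset.range (3 * s) →
      (∀ u ∈ U, ∏ i ∈ I, L.σ i (algebraMap (𝓞 K) K (u : (𝓞 K)ˣ)) = 1) →
      tripleSet s (I ∩ Finset.range s) = I := by
    intro I hI hrel
    ext i
    rw [mem_tripleSet]
    constructor
    · rintro (h | ⟨j, hj, rfl⟩ | ⟨j, hj, rfl⟩)
      · exact (Finset.mem_inter.1 h).1
      · obtain ⟨hjI, hjr⟩ := Finset.mem_inter.1 hj
        exact ((key I hI hrel j (Finset.mem_range.1 hjr)).1).1 hjI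
      · obtain ⟨hjI, hjr⟩ := Finset.mem_inter.1 hj
        exact ((key I hI hrel j (Finset.mem_range.1 hjr)).2).1 hjI
    · intro hi
      have hi3 : i < 3 * s := Finset.mem_range.1 (hI hi)
      rcases lt_or_ge i s with h1 | h1
      · exact Or.inl (Finset.mem_inter.2 ⟨hi, Finset.mem_range.2 h1⟩)
      rcases lt_or_ge i (2 * s) with h2 | h2
      · refine Or.inr (Or.inl ⟨i - s, ?_, by omega⟩)
        have hjs : i - s < s := by omega
        have : i - s ∈ I := ((key I hI hrel (i - s) hjs).1).2 (by
          have : s + (i - s) = i := by omega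
          rwa [this])
        exact Finset.mem_inter.2 ⟨this, Finset.mem_range.2 hjs⟩
      · refine Or.inr (Or.inr ⟨i - 2 * s, ?_, by omega⟩)
        have hjs : i - 2 * s < s := by omega
        have : i - 2 * s ∈ I := ((key I hI hrel (i - 2 * s) hjs).2).2 (by
          have : 2 * s + (i - 2 * s) = i := by omega
          rwa [this])
        exact Finset.mem_inter.2 ⟨this, Finset.mem_range.2 hjs⟩
  by_cases hm : 3 ∣ m
  · obtain ⟨k, rfl⟩ := hm
    rw [if_pos ⟨k, rfl⟩]
    have hset : {I : Finset ℕ | I ⊆ Finset.range (3 * s) ∧ I.card = 3 * k ∧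
        ∀ u ∈ U, ∏ i ∈ I, L.σ i (algebraMap (𝓞 K) K (u : (𝓞 K)ˣ)) = 1}
        = ↑(((Finset.range s).powersetCard k).image (tripleSet s)) := by
      ext I
      simp only [Set.mem_setOf_eq, Finset.coe_image, Set.mem_image, Finset.mem_coe,
        Finset.mem_powersetCard]
      constructor
      · rintro ⟨hI, hcard, hrel⟩
        refine ⟨I ∩ Finset.range s, ⟨Finset.inter_subset_right, ?_⟩, hstruct I hI hrel⟩
        have hc := card_tripleSet (s := s) (S := I ∩ Finset.range s) Finset.inter_subset_right
        rw [hstruct I hI hrel, hcard] at hc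
        omega
      · rintro ⟨S, ⟨hSsub, hScard⟩, rfl⟩
        refine ⟨?_, ?_, ?_⟩
        · intro i hi
          rw [mem_tripleSet] at hi
          rcases hi with h | ⟨j, hj, rfl⟩ | ⟨j, hj, rfl⟩ <;>
            [skip; skip; skip] <;>
            first
            | (exact Finset.mem_range.2 (by have := Finset.mem_range.1 (hSsub h); omega))
            | (exact Finset.mem_range.2 (by have := Finset.mem_range.1 (hSsub hj); omega))
        · rw [card_tripleSet hSsub, hScard]
        · intro u hu
          rw [prod_tripleSet hSsub]
          apply Finset.prod_eq_one
          intro j hjS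
          have hj : j < s := Finset.mem_range.1 (hSsub hjS)
          rw [L.conjRel j hj, ComplexEmbedding.conjugate_coe_eq, mul_assoc, Complex.mul_conj]
          have h := hpc u hu j hj
          rw [← Complex.ofReal_pow, Complex.sq_norm] at h
          exact h
    rw [hset, Set.ncard_coe_finset, Finset.card_image_of_injOn tripleSet_injOn,
      Finset.card_powersetCard, Finset.card_range,
      Nat.mul_div_cancel_left k (by norm_num : 0 < 3)]
  · rw [if_neg hm]
    have hset : {I : Finset ℕ | I ⊆ Finset.range (3 * s) ∧ I.card = m ∧
        ∀ u ∈ U, ∏ i ∈ I, L.σ i (algebraMap (𝓞 K) K (u : (𝓞 K)ˣ)) = 1} = ∅ := by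
      ext I
      simp only [Set.mem_setOf_eq, Set.mem_empty_iff_false, iff_false, not_and]
      rintro hI hcard hrel
      apply hm
      refine ⟨(I ∩ Finset.range s).card, ?_⟩
      have hc := card_tripleSet (s := s) (S := I ∩ Finset.range s) Finset.inter_subset_right
      rw [hstruct I hI hrel, hcard] at hc
      exact hc
    rw [hset, Set.ncard_empty]
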